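/- Let S be a finite semigroup and n₀ a natural number such that for every n > n₀, every operation f : Sⁿ → S that depends on all of its variables and all of whose identification minors f_{ij} (1 ≤ i < j ≤ n) are induced by words over X_n is itself induced by a word over X_n. Then the opposite semigroup S^op (the same underlying set with multiplication a ∘ b = b·a) has the same property with the same n₀: for every n > n₀, every operation on S^op depending on all of its variables whose identification minors are all induced by words is induced by a word. (Consequently, if a finite semigroup is finitely related, so is its dual semigroup.) -/

import Mathlib

/-! ### Words and word functions -/

/-- The word `w^{(i j)}`: replace every occurrence of the letter `i` by `j`. -/
def subst {X : Type*} [DecidableEq X] (w : List X) (i j : X) : List X :=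
  w.map fun t => if t = i then j else t

/-- The prefix `s(w)`: the longest prefix of `w` containing all but one of the
letters of `c(w)` (the empty word if `w` is empty). -/
def wordS {X : Type*} [DecidableEq X] (w : List X) : List X :=
  w.take (w.toFinset.sup fun x => w.idxOf x)

/-- The letter `σ(w)` (the last letter of `w` to occur from the left), as a word of
length at most one; `s(w) ++ σ(w)` is the shortest prefix of `w` with full content. -/
def wordSigma {X : Type*} [DecidableEq X] (w : List X) : List X :=
  (w.drop (w.toFinset.sup fun x => w.idxOf x)).take 1

/-- The suffix `e(w)`, dual to `s(w)`. -/
def wordE {X : Type*} [DecidableEq X] (w : List X) : List X :=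
  (wordS w.reverse).reverse

/-- The letter `ε(w)` (as a word of length at most one), dual to `σ(w)`. -/
def wordEps {X : Type*} [DecidableEq X] (w : List X) : List X :=
  (wordSigma w.reverse).reverse

/-- The initial part `i₂(w)`: retain only the first occurrence from the left of
each letter of `w`. -/
def initPart {X : Type*} [DecidableEq X] (w : List X) : List X :=
  w.reverse.dedup.reverse

/-- The dual `F̄` of a word function `F`: `F̄(w) = reverse (F (reverse w))`. -/
def dualW {X : Type*} (F : List X → List X) (w : List X) : List X :=
  (F w.reverse).reverse

theorem wordS_length_lt {X : Type*} [DecidableEq X] {w : List X} (hw : w ≠ []) :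
    (wordS w).length < w.length := by
  have hpos : 0 < w.length := List.length_pos_iff.mpr hw
  have hk : (w.toFinset.sup fun x => w.idxOf x) < w.length := by
    rw [Finset.sup_lt_iff hpos]
    intro x hx
    exact List.idxOf_lt_length_iff.mpr (List.mem_toFinset.mp hx)
  simp only [wordS, List.length_take]
  omega

/-- The common recursion defining the word functions `h_m` and `i_m` of Gerhard
and Petrich: `t_m(w) = t_m(s(w)) · σ(w) · t̄_{m-1}(w)` for `m ≥ 3`, where the base
function (`h₂` = first letter, `i₂` = initial part) is a parameter, and all
functions send the empty word to the empty word. -/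
def tW {X : Type*} [DecidableEq X] (base : List X → List X) : ℕ → List X → List X
  | m, w =>
    if hw : w = [] then []
    else if hm : m ≤ 2 then base w
    else tW base m (wordS w) ++ wordSigma w ++ (tW base (m - 1) w.reverse).reverse
termination_by m w => m + w.length
decreasing_by
  · have := wordS_length_lt hw; omega
  · simp only [List.length_reverse, List.length_unattach, List.length_attach]; omega

/-- The word function `h_m` (`m ≥ 2`): `h₂(w)` is the first letter of `w`, and
`h_m(w) = h_m(s(w)) · σ(w) · h̄_{m-1}(w)` for `m ≥ 3`. -/
def hW {X : Type*} [DecidableEq X] : ℕ → List X → List X :=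
  tW fun w => w.take 1

/-- The word function `i_m` (`m ≥ 2`): `i₂(w)` is the initial part of `w`, and
`i_m(w) = i_m(s(w)) · σ(w) · ī_{m-1}(w)` for `m ≥ 3`. -/
def iW {X : Type*} [DecidableEq X] : ℕ → List X → List X :=
  tW initPart

/-! ### Operations induced by words -/

/-- Evaluation of a word `w` over the alphabet `X` in a semigroup `S` under the
assignment `a : X → S`, computed in the monoid `WithOne S` (so that the empty word
evaluates to `1` and a nonempty word to the coercion of its value in `S`). -/
def evalW {X S : Type*} [Semigroup S] (a : X → S) (w : List X) : WithOne S :=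
  (w.map fun t => (a t : WithOne S)).prod

/-- The identification minor `f_{i j}` of an `n`-ary operation: the `i`-th argument
is replaced by the `j`-th. -/
def minor {α β : Type*} {n : ℕ} (f : (Fin n → α) → β) (i j : Fin n) :
    (Fin n → α) → β :=
  fun a => f (Function.update a i (a j))

/-- `f` depends on its `i`-th variable. -/
def DependsOnVar {α β : Type*} {n : ℕ} (f : (Fin n → α) → β) (i : Fin n) : Prop :=
  ∃ a b : Fin n → α, (∀ k : Fin n, k ≠ i → a k = b k) ∧ f a ≠ f b

/-- `f : Sⁿ → S` is induced by a (nonempty) word over `X_n = {x_1, …, x_n}`. -/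
def InducedByWord {S : Type*} [Semigroup S] {n : ℕ} (f : (Fin n → S) → S) : Prop :=
  ∃ w : List (Fin n), w ≠ [] ∧ ∀ a : Fin n → S, (f a : WithOne S) = evalW a w


lemma evalW_op_aux {X S : Type*} [Semigroup S] (a : X → S) :
    ∀ w : List X, w ≠ [] → ∃ s : S, evalW a w = (s : WithOne S) ∧
      evalW (fun t => MulOpposite.op (a t)) w.reverse
        = (MulOpposite.op s : WithOne Sᵐᵒᵖ) := by
  intro w
  induction w with
  | nil => simp
  | cons t w ih =>
    intro _
    rcases eq_or_ne w [] with rfl | hw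
    · exact ⟨a t, by simp [evalW], by simp [evalW]⟩
    · obtain ⟨s, hs1, hs2⟩ := ih hw
      refine ⟨a t * s, ?_, ?_⟩
      · simp only [evalW, List.map_cons, List.prod_cons] at hs1 ⊢
        simp [hs1, ← WithOne.coe_mul]
      · simp only [List.reverse_cons, evalW, List.map_append, List.prod_append]
        simp only [evalW] at hs2
        rw [hs2]
        simp [← WithOne.coe_mul]

/-- If a finite semigroup `S` satisfies, for all `n > n₀`, the
condition that every operation on `S` depending on all of its variables whose
identification minors are all induced by words is itself induced by a word, then
the opposite (dual) semigroup `Sᵐᵒᵖ` satisfies the same condition with the same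
`n₀`. Hence if a finite semigroup is finitely related, so is its dual. -/
theorem dual_semigroup_finitely_related
    {S : Type*} [Semigroup S] [Fintype S] (n₀ : ℕ)
    (hS : ∀ n : ℕ, n₀ < n → ∀ f : (Fin n → S) → S,
      (∀ i : Fin n, DependsOnVar f i) →
      (∀ i j : Fin n, i < j → InducedByWord (minor f i j)) →
      InducedByWord f) :
    ∀ n : ℕ, n₀ < n → ∀ f : (Fin n → Sᵐᵒᵖ) → Sᵐᵒᵖ,
      (∀ i : Fin n, DependsOnVar f i) →
      (∀ i j : Fin n, i < j → InducedByWord (minor f i j)) →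
      InducedByWord f := by
  intro n hn f hdep hmin
  set g : (Fin n → S) → S := fun a => (f fun k => MulOpposite.op (a k)).unop with hg
  have hfg : ∀ b : Fin n → Sᵐᵒᵖ, f b = MulOpposite.op (g fun k => (b k).unop) := by
    intro b; simp [hg]
  have hgdep : ∀ i : Fin n, DependsOnVar g i := by
    intro i
    obtain ⟨a, b, hab, hne⟩ := hdep i
    refine ⟨fun k => (a k).unop, fun k => (b k).unop, fun k hk => by simp only []; rw [hab k hk], ?_⟩
    intro h
    apply hne
    rw [hfg a, hfg b, h]
  have hgmin : ∀ i j : Fin n, i < j → InducedByWord (minor g i j) := by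
    intro i j hij
    obtain ⟨w, hw, hwval⟩ := hmin i j hij
    refine ⟨w.reverse, by simpa using hw, fun a => ?_⟩
    obtain ⟨s, hs1, hs2⟩ := evalW_op_aux a w.reverse (by simpa using hw)
    rw [List.reverse_reverse] at hs2
    have h1 : minor f i j (fun k => MulOpposite.op (a k)) = MulOpposite.op s := by
      have := hwval (fun k => MulOpposite.op (a k))
      rw [hs2] at this
      exact_mod_cast this
    have h2 : minor g i j a = s := by
      simp only [minor, hg]
      have : (fun k => MulOpposite.op (Function.update a i (a j) k))
          = Function.update (fun k => MulOpposite.op (a k)) i (MulOpposite.op (a j)) := by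
        funext k
        rcases eq_or_ne k i with rfl | hk
        · simp
        · simp [Function.update_of_ne hk]
      rw [this]
      simp only [minor] at h1
      rw [h1]
      simp
    rw [h2, hs1]
  obtain ⟨w, hw, hwval⟩ := hS n hn g hgdep hgmin
  refine ⟨w.reverse, by simpa using hw, fun b => ?_⟩
  obtain ⟨s, hs1, hs2⟩ := evalW_op_aux (fun k => (b k).unop) w hw
  have hb : (fun t => MulOpposite.op ((fun k => (b k).unop) t)) = b := by
    funext k; simp
  rw [hb] at hs2
  rw [hs2, hfg b]
  have : g (fun k => (b k).unop) = s := by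
    have := hwval (fun k => (b k).unop)
    rw [hs1] at this
    exact_mod_cast this
  rw [this]
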